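/- arXiv:2605.14470 — 2 statements merged into one kernel-verified Lean document; each statement's English description precedes it below -/
import Mathlib

section
/- Let U be a category with pullbacks and j_! : U → X a left adjoint functor. Then j_! is left Cartesian if and only if for every object A ∈ U, the induced functor on slices U_{/A} → X_{/j_!A} is a reflective localization (i.e., its right adjoint is fully faithful). -/
/-!
The slice functor `Over.post j₁ : Over A ⥤ Over (j₁ A)` always has the right adjoint
`(v : T ⟶ j₁ A) ↦ js T ×_{js j₁ A} A` (`Over.postAdjunctionLeft`), and the slices are reflective
iff its counits `j₁ (js T ×_{js j₁ A} A) ⟶ j₁ js T ⟶ T` are all invertible.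
Such a counit is the top edge of the locally Cartesian square for `f = v` and `g = η_A`, whose
bottom edge is the identity, so local Cartesianness makes it invertible. Conversely, if all counits
are invertible, a cone `(u, v)` over `f` and `j₁ g ≫ ε_B` factors through the counit at `v` by
transposing `u`. The factorisation is unique because a competitor `m : T ⟶ j₁ P`, where
`P = js A ×_{js B} Z`, is recovered from the counit at `m` over `j₁ P`, which is again invertible.
-/

open CategoryTheory CategoryTheory.Limits

universe v₁ v₂ u₁ u₂

/-- An adjunction `j₁ ⊣ js` is locally Cartesian if for every `f : A ⟶ B` and
`g : Z ⟶ js.obj B`, the square comparing `j₁ (js A ×_{js B} Z)` with the pullback of `f`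
along `j₁ g ≫ ε_B` is Cartesian. -/
def IsLocallyCartesianAdj {U : Type u₁} [Category.{v₁} U] {X : Type u₂} [Category.{v₂} X]
    {j₁ : U ⥤ X} {js : X ⥤ U} (adj : j₁ ⊣ js) [HasPullbacks U] : Prop :=
  ∀ {A B : X} (f : A ⟶ B) {Z : U} (g : Z ⟶ js.obj B),
    IsPullback (j₁.map (pullback.fst (js.map f) g) ≫ adj.counit.app A)
      (j₁.map (pullback.snd (js.map f) g)) f (j₁.map g ≫ adj.counit.app B)

namespace CategoryTheory

theorem Adjunction.isIso_counit_iff_exists_fullyFaithful {C : Type*} {D : Type*} [Category C]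
    [Category D] {L : C ⥤ D} {R : D ⥤ C} (h : L ⊣ R) :
    IsIso h.counit ↔ ∃ R' : D ⥤ C, Nonempty (L ⊣ R') ∧ R'.Full ∧ R'.Faithful := by
  constructor
  · intro
    exact ⟨R, ⟨h⟩, h.fullyFaithfulROfIsIsoCounit.full, h.fullyFaithfulROfIsIsoCounit.faithful⟩
  · rintro ⟨R', ⟨h'⟩, _, _⟩
    have := Functor.Full.of_iso (h'.rightAdjointUniq h)
    have := Functor.Faithful.of_iso (h'.rightAdjointUniq h)
    infer_instance

namespace Adjunction

variable {U : Type u₁} [Category.{v₁} U] {X : Type u₂} [Category.{v₂} X] [HasPullbacks U]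
  {j₁ : U ⥤ X} {js : X ⥤ U} (adj : j₁ ⊣ js)

noncomputable def sliceCounit {A : U} {T : X} (v : T ⟶ j₁.obj A) :
    j₁.obj (pullback (js.map v) (adj.unit.app A)) ⟶ T :=
  j₁.map (pullback.fst _ _) ≫ adj.counit.app T

lemma postAdjunctionLeft_counit_app_left {A : U} (y : Over (j₁.obj A)) :
    ((Over.postAdjunctionLeft adj).counit.app y).left = adj.sliceCounit y.hom := by
  simp only [Over.postAdjunctionLeft_counit_app_left]
  rfl

lemma isIso_postAdjunctionLeft_counit_iff (A : U) :
    IsIso (Over.postAdjunctionLeft adj (X := A)).counit ↔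
      ∀ {T : X} (v : T ⟶ j₁.obj A), IsIso (adj.sliceCounit v) := by
  rw [NatTrans.isIso_iff_isIso_app]
  constructor
  · intro h T v
    have := (Over.forget _).map_isIso ((Over.postAdjunctionLeft adj).counit.app (Over.mk v))
    rwa [Over.forget_map, postAdjunctionLeft_counit_app_left] at this
  · intro h y
    have : IsIso ((Over.forget _).map ((Over.postAdjunctionLeft adj).counit.app y)) := by
      rw [Over.forget_map, postAdjunctionLeft_counit_app_left]
      exact h y.hom
    exact isIso_of_reflects_iso _ (Over.forget _)

lemma sliceCounit_comp {A : U} {T : X} (v : T ⟶ j₁.obj A) :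
    adj.sliceCounit v ≫ v = j₁.map (pullback.snd _ _) := by
  rw [sliceCounit, Category.assoc, ← adj.counit_naturality, ← j₁.map_comp_assoc,
    pullback.condition]
  simp

lemma sliceCounit_eq_map_comp_sliceCounit {P Z : U} {T : X} {m : T ⟶ j₁.obj P}
    {v : T ⟶ j₁.obj Z}
    (e : pullback (js.map m) (adj.unit.app P) ⟶ pullback (js.map v) (adj.unit.app Z))
    (he : e ≫ pullback.fst _ _ = pullback.fst _ _) :
    adj.sliceCounit m = j₁.map e ≫ adj.sliceCounit v := by
  rw [sliceCounit, sliceCounit, ← j₁.map_comp_assoc, he]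

lemma pullback_snd_comp_eq {W : U} {T C : X} (m : T ⟶ j₁.obj W) (t : W ⟶ js.obj C) :
    pullback.snd (js.map m) (adj.unit.app W) ≫ t =
      pullback.fst _ _ ≫ js.map (m ≫ j₁.map t ≫ adj.counit.app C) := by
  rw [js.map_comp, ← Category.assoc, pullback.condition]
  simp

section Cartesian

variable {A B : X} (f : A ⟶ B) {Z : U} (g : Z ⟶ js.obj B)

lemma counitSquare_comm :
    (j₁.map (pullback.fst (js.map f) g) ≫ adj.counit.app A) ≫ f =
      j₁.map (pullback.snd (js.map f) g) ≫ j₁.map g ≫ adj.counit.app B := by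
  rw [Category.assoc]
  erw [← adj.counit_naturality]
  rw [← j₁.map_comp_assoc, pullback.condition, j₁.map_comp_assoc]

noncomputable def sliceLift {T : X} (u : T ⟶ A) (v : T ⟶ j₁.obj Z)
    (huv : u ≫ f = v ≫ j₁.map g ≫ adj.counit.app B) :
    pullback (js.map v) (adj.unit.app Z) ⟶ pullback (js.map f) g :=
  pullback.lift (pullback.fst _ _ ≫ js.map u) (pullback.snd _ _) (by
    rw [Category.assoc, ← js.map_comp, huv, ← pullback_snd_comp_eq])

variable {f g}

lemma map_sliceLift_comp_fst {T : X} (u : T ⟶ A) (v : T ⟶ j₁.obj Z)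
    (huv : u ≫ f = v ≫ j₁.map g ≫ adj.counit.app B) :
    j₁.map (adj.sliceLift f g u v huv) ≫ j₁.map (pullback.fst _ _) ≫ adj.counit.app A =
      adj.sliceCounit v ≫ u := by
  simp only [sliceLift, sliceCounit, ← j₁.map_comp_assoc, pullback.lift_fst]
  simp

lemma map_sliceLift_comp_snd {T : X} (u : T ⟶ A) (v : T ⟶ j₁.obj Z)
    (huv : u ≫ f = v ≫ j₁.map g ≫ adj.counit.app B) :
    j₁.map (adj.sliceLift f g u v huv) ≫ j₁.map (pullback.snd _ _) = adj.sliceCounit v ≫ v := by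
  rw [← j₁.map_comp, sliceLift, pullback.lift_snd, sliceCounit_comp]

variable (f g) in
lemma sliceCounit_comp_eq_map_sliceLift
    (H : ∀ (A : U) {T : X} (v : T ⟶ j₁.obj A), IsIso (adj.sliceCounit v))
    {T : X} (m : T ⟶ j₁.obj (pullback (js.map f) g)) (u : T ⟶ A) (v : T ⟶ j₁.obj Z)
    (hu : m ≫ j₁.map (pullback.fst _ _) ≫ adj.counit.app A = u)
    (hv : m ≫ j₁.map (pullback.snd _ _) = v) (huv : u ≫ f = v ≫ j₁.map g ≫ adj.counit.app B) :
    adj.sliceCounit v ≫ m = j₁.map (adj.sliceLift f g u v huv) := by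
  subst hu hv
  let e : pullback (js.map m) (adj.unit.app _) ⟶
      pullback (js.map (m ≫ j₁.map (pullback.snd _ _))) (adj.unit.app Z) :=
    pullback.lift (pullback.fst _ _) (pullback.snd _ _ ≫ pullback.snd _ _) (by
      simp [pullback.condition_assoc])
  have hm := adj.sliceCounit_eq_map_comp_sliceCounit e (pullback.lift_fst _ _ _)
  have he : IsIso (j₁.map e) := by
    have := H _ (m ≫ j₁.map (pullback.snd (js.map f) g))
    have := H _ m
    rw [hm] at this
    exact IsIso.of_isIso_comp_right _ (adj.sliceCounit _)
  have hsnd : pullback.snd (js.map m) (adj.unit.app _) = e ≫ adj.sliceLift f g _ _ huv := by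
    apply pullback.hom_ext
    · rw [Category.assoc, sliceLift, pullback.lift_fst, ← Category.assoc, pullback.lift_fst,
        pullback_snd_comp_eq]
    · rw [Category.assoc, sliceLift, pullback.lift_snd, pullback.lift_snd]
  rw [← cancel_epi (j₁.map e), ← Category.assoc, ← hm, sliceCounit_comp, hsnd, j₁.map_comp]

theorem isLocallyCartesianAdj_of_isIso_sliceCounit
    (H : ∀ (A : U) {T : X} (v : T ⟶ j₁.obj A), IsIso (adj.sliceCounit v)) :
    IsLocallyCartesianAdj adj := by
  intro A B f Z g
  refine IsPullback.of_isLimit (PullbackCone.IsLimit.mk (adj.counitSquare_comm f g)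
    (fun s => inv (adj.sliceCounit s.snd) ≫ j₁.map (adj.sliceLift f g s.fst s.snd s.condition))
    (fun s => ?_) (fun s => ?_) (fun s m hfst hsnd => ?_))
  · rw [Category.assoc, map_sliceLift_comp_fst, IsIso.inv_hom_id_assoc]
  · rw [Category.assoc, map_sliceLift_comp_snd, IsIso.inv_hom_id_assoc]
  · rw [IsIso.eq_inv_comp]
    exact adj.sliceCounit_comp_eq_map_sliceLift f g H m s.fst s.snd hfst hsnd s.condition

end Cartesian

theorem isIso_sliceCounit_of_isLocallyCartesianAdj (h : IsLocallyCartesianAdj adj) {A : U} {T : X}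
    (v : T ⟶ j₁.obj A) : IsIso (adj.sliceCounit v) := by
  have hv : IsPullback (adj.sliceCounit v) (j₁.map (pullback.snd _ _)) v (𝟙 _) := by
    simpa [sliceCounit] using h v (adj.unit.app A)
  exact hv.isIso_fst_of_isIso

theorem isLocallyCartesianAdj_iff_isIso_sliceCounit :
    IsLocallyCartesianAdj adj ↔ ∀ (A : U) {T : X} (v : T ⟶ j₁.obj A), IsIso (adj.sliceCounit v) :=
  ⟨fun h _ _ v => adj.isIso_sliceCounit_of_isLocallyCartesianAdj h v,
    adj.isLocallyCartesianAdj_of_isIso_sliceCounit⟩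

end Adjunction

end CategoryTheory

open CategoryTheory.Adjunction in
/-- A left adjoint `j₁ : U ⥤ X`, with `U` having pullbacks, is left Cartesian iff for every
`A : U` the induced functor on slices `U_{/A} → X_{/j₁ A}` is a reflective localization, i.e.
admits a fully faithful right adjoint. -/
theorem isLocallyCartesian_iff_slices_reflective {U : Type u₁} [Category.{v₁} U]
    {X : Type u₂} [Category.{v₂} X] [HasPullbacks U]
    (j₁ : U ⥤ X) (js : X ⥤ U) (adj : j₁ ⊣ js) :
    IsLocallyCartesianAdj adj ↔
      ∀ A : U, ∃ R : Over (j₁.obj A) ⥤ Over A,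
        Nonempty ((Over.post j₁ : Over A ⥤ Over (j₁.obj A)) ⊣ R) ∧ R.Full ∧ R.Faithful := by
  rw [isLocallyCartesianAdj_iff_isIso_sliceCounit]
  refine forall_congr' fun A => ?_
  rw [← isIso_postAdjunctionLeft_counit_iff, isIso_counit_iff_exists_fullyFaithful]
  exact Iff.rfl
end

section
/- Let U be a category with pullbacks and j_! : U → X a left adjoint functor. The following are equivalent: (1) j_! is conservative, preserves pullbacks, and the counit of the adjunction is Cartesian; (2) j_! is conservative and left Cartesian; (3) for every A ∈ U, the induced functor U_{/A} → X_{/j_!A} is an equivalence of categories. Moreover, if additionally U has a terminal object, these conditions hold if and only if j_! is equivalent to a slice projection X_{/B} → X for some object B ∈ X. -/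
open CategoryTheory CategoryTheory.Limits

universe v₁ v₂ u₁ u₂

/-!
The slice functor `U/A ⥤ X/j₁A` has the right adjoint `Y ↦ js Y ×_{js j₁A} A`. Its counit at `Y`
is the top edge of the locally Cartesian square for `Y ⟶ j₁A` and the unit `η_A`, whose bottom
edge `ε ∘ j₁η_A` is the identity; so the counit is invertible, and then so is the unit, because
`j₁`, hence each slice functor, is conservative.

Conversely, slice equivalences reflect isomorphisms and preserve binary products in slices, which
are pullbacks. For the counit square of `f : A ⟶ B` it suffices to test the pullback property on
objects `j₁ W` over `j₁ js B`, as every object is isomorphic to one; there both sides are maps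
`W ⟶ js A` over `js B`, by full faithfulness and by adjunction.

A slice projection `X/B ⥤ X` induces equivalences on slices (iterated slices are slices), and
`U ≌ U/⊤` gives the converse.
-/

namespace CategoryTheory

variable {C D : Type*} [Category C] [Category D]

instance Over.reflectsIsomorphisms_post (F : C ⥤ D) [F.ReflectsIsomorphisms] {Z : C} :
    (Over.post F (X := Z)).ReflectsIsomorphisms where
  reflects f _ := by
    have : IsIso (F.map f.left) :=
      inferInstanceAs (IsIso ((Over.forget _).map ((Over.post F).map f)))
    have : IsIso ((Over.forget Z).map f) := isIso_of_reflects_iso f.left F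
    exact isIso_of_reflects_iso f (Over.forget Z)

lemma Functor.reflectsIsomorphisms_of_post (F : C ⥤ D)
    [∀ Z : C, (Over.post F (X := Z)).ReflectsIsomorphisms] : F.ReflectsIsomorphisms where
  reflects {_ B} f _ := by
    let φ : Over.mk f ⟶ Over.mk (𝟙 B) := Over.homMk f
    have : IsIso ((Over.forget _).map ((Over.post F).map φ)) := ‹IsIso (F.map f)›
    have : IsIso ((Over.post F).map φ) := isIso_of_reflects_iso _ (Over.forget _)
    have : IsIso φ := isIso_of_reflects_iso φ (Over.post F)
    exact inferInstanceAs (IsIso ((Over.forget B).map φ))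

lemma Functor.preservesLimitsOfShape_walkingCospan_of_post [HasPullbacks C] (F : C ⥤ D)
    [∀ Z : C, PreservesLimitsOfShape (Discrete WalkingPair) (Over.post F (X := Z))] :
    PreservesLimitsOfShape WalkingCospan F :=
  preservesLimitsOfShape_walkingCospan_of_forall_isPullback fun _ _ _ f g _ =>
    ⟨_, _, _, .of_hasPullback f g, Over.isPullback_of_binaryFan_isLimit _
      (isLimitMapConeBinaryFanEquiv _ _ _ (isLimitOfPreserves (Over.post F)
        (IsLimit.pullbackConeEquivBinaryFanFunctor (pullbackIsPullback f g))))⟩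

lemma Adjunction.isIso_unit_of_isIso_counit {L : C ⥤ D} {R : D ⥤ C} (adj : L ⊣ R)
    [L.ReflectsIsomorphisms] [IsIso adj.counit] : IsIso adj.unit := by
  have (W : C) : IsIso (adj.unit.app W) := by
    have : IsIso (L.map (adj.unit.app W)) :=
      isIso_of_comp_hom_eq_id _ (adj.left_triangle_components W)
    exact isIso_of_reflects_iso _ L
  exact NatIso.isIso_of_isIso_app _

lemma IsPullback.of_essSurj_over {P A B Z : C} {fst : P ⟶ A} {snd : P ⟶ Z} {f : A ⟶ B}
    {g : Z ⟶ B} (w : fst ≫ f = snd ≫ g) (E : D ⥤ Over Z) [E.EssSurj]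
    (h : ∀ (W : D) (u : (E.obj W).left ⟶ A), u ≫ f = (E.obj W).hom ≫ g →
      ∃! l : (E.obj W).left ⟶ P, l ≫ fst = u ∧ l ≫ snd = (E.obj W).hom) :
    IsPullback fst snd f g := by
  have exists_unique_lift {T : C} (p : T ⟶ A) (q : T ⟶ Z) (hpq : p ≫ f = q ≫ g) :
      ∃! l : T ⟶ P, l ≫ fst = p ∧ l ≫ snd = q := by
    let e : (E.obj (E.objPreimage (Over.mk q))).left ≅ T :=
      (Over.forget Z).mapIso (E.objObjPreimageIso (Over.mk q))
    have he : e.hom ≫ q = (E.obj _).hom := Over.w (E.objObjPreimageIso (Over.mk q)).hom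
    obtain ⟨l, ⟨hl₁, hl₂⟩, hl⟩ := h _ (e.hom ≫ p) (by rw [Category.assoc, hpq, reassoc_of% he])
    refine ⟨e.inv ≫ l, ⟨?_, ?_⟩, fun m ⟨hm₁, hm₂⟩ => ?_⟩
    · rw [Category.assoc, hl₁, e.inv_hom_id_assoc]
    · rw [Category.assoc, hl₂, ← he, e.inv_hom_id_assoc]
    · rw [← hl (e.hom ≫ m) ⟨by rw [Category.assoc, hm₁], by rw [Category.assoc, hm₂, he]⟩,
        e.inv_hom_id_assoc]
  have hs (s : PullbackCone f g) := exists_unique_lift s.fst s.snd s.condition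
  exact ⟨⟨w⟩, ⟨PullbackCone.IsLimit.mk w (fun s => (hs s).choose) (fun s => (hs s).choose_spec.1.1)
    (fun s => (hs s).choose_spec.1.2) (fun s m h₁ h₂ => (hs s).choose_spec.2 m ⟨h₁, h₂⟩)⟩⟩

lemma Over.isEquivalence_post_forget {B : C} (f : Over B) :
    (Over.post (Over.forget B) (X := f)).IsEquivalence :=
  inferInstanceAs (Over.iteratedSliceEquiv f).functor.IsEquivalence

lemma Functor.isEquivalence_post_iff_exists_equivalence_over [HasTerminal C] (F : C ⥤ D) :
    (∀ A : C, (Over.post F (X := A)).IsEquivalence) ↔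
      ∃ (B : D) (e : C ≌ Over B), Nonempty (e.functor ⋙ Over.forget B ≅ F) := by
  refine ⟨fun h => ?_, fun ⟨B, e, ⟨i⟩⟩ A => ?_⟩
  · exact ⟨F.obj (⊤_ C), (Over.equivalenceOfIsTerminal terminalIsTerminal).symm.trans
      (Over.post F).asEquivalence, ⟨Iso.refl _⟩⟩
  · have := Over.isEquivalence_post_forget (e.functor.obj A)
    have : (Over.post (e.functor ⋙ Over.forget B) (X := A)).IsEquivalence :=
      inferInstanceAs (Over.post e.functor ⋙ Over.post (Over.forget B)).IsEquivalence
    exact Functor.isEquivalence_of_iso (Over.postCongr i)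

end CategoryTheory

section

variable {U : Type*} [Category U] {X : Type*} [Category X] {j₁ : U ⥤ X} {js : X ⥤ U}
  (adj : j₁ ⊣ js)

lemma CategoryTheory.Adjunction.isPullback_counit_of_post {A B : X} (f : A ⟶ B)
    [(Over.post j₁ (X := js.obj B)).Full] [(Over.post j₁ (X := js.obj B)).EssSurj] :
    IsPullback (adj.counit.app A) (j₁.map (js.map f)) f (adj.counit.app B) := by
  have w : adj.counit.app A ≫ f = j₁.map (js.map f) ≫ adj.counit.app B :=
    (adj.counit.naturality f).symm
  refine .of_essSurj_over w (Over.post j₁) fun W (u : j₁.obj W.left ⟶ A)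
    (hu : u ≫ f = j₁.map W.hom ≫ adj.counit.app B) => ?_
  change ∃! l : j₁.obj W.left ⟶ j₁.obj (js.obj A),
    l ≫ adj.counit.app A = u ∧ l ≫ j₁.map (js.map f) = j₁.map W.hom
  have exists_map_eq (l : j₁.obj W.left ⟶ j₁.obj (js.obj A))
      (hl : l ≫ j₁.map (js.map f) = j₁.map W.hom) : ∃ m : W.left ⟶ js.obj A, j₁.map m = l :=
    ⟨((Over.post j₁).preimage (Over.homMk l hl :
      (Over.post j₁).obj W ⟶ (Over.post j₁).obj (Over.mk (js.map f)))).left,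
      congrArg CommaMorphism.left ((Over.post j₁).map_preimage _)⟩
  refine ⟨j₁.map (adj.homEquiv _ _ u), ⟨?_, ?_⟩, ?_⟩
  · exact (adj.homEquiv _ _).symm_apply_apply u
  · rw [← j₁.map_comp]
    congr 1
    apply (adj.homEquiv _ _).symm.injective
    rw [adj.homEquiv_naturality_right_symm, Equiv.symm_apply_apply, hu, adj.homEquiv_counit]
  · rintro l ⟨hl₁, hl₂⟩
    obtain ⟨m, rfl⟩ := exists_map_eq l hl₂
    rw [← hl₁]
    exact congrArg j₁.map ((adj.homEquiv _ _).apply_symm_apply m).symm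

variable [HasPullbacks U]

lemma IsLocallyCartesianAdj.of_isPullback_counit [PreservesLimitsOfShape WalkingCospan j₁]
    (h : ∀ {A B : X} (f : A ⟶ B),
      IsPullback (adj.counit.app A) (j₁.map (js.map f)) f (adj.counit.app B)) :
    IsLocallyCartesianAdj adj := fun f _ g =>
  ((IsPullback.of_hasPullback (js.map f) g).map j₁).paste_horiz (h f)

variable {adj}

lemma IsLocallyCartesianAdj.isIso_postAdjunctionLeft_counit (h : IsLocallyCartesianAdj adj)
    (A : U) : IsIso (Over.postAdjunctionLeft adj (X := A)).counit := by
  have (Y : Over (j₁.obj A)) : IsIso ((Over.postAdjunctionLeft adj).counit.app Y) := by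
    have hY := h Y.hom (adj.unit.app A)
    rw [adj.left_triangle_components A] at hY
    have : IsIso (CommaMorphism.left ((Over.postAdjunctionLeft adj).counit.app Y)) := by
      rw [Over.postAdjunctionLeft_counit_app_left]
      exact hY.isIso_fst_of_isIso (IsIso.id _)
    have : IsIso ((Over.forget _).map ((Over.postAdjunctionLeft adj).counit.app Y)) := this
    exact isIso_of_reflects_iso _ (Over.forget _)
  exact NatIso.isIso_of_isIso_app _

lemma IsLocallyCartesianAdj.isEquivalence_post [j₁.ReflectsIsomorphisms]
    (h : IsLocallyCartesianAdj adj) (A : U) : (Over.post j₁ (X := A)).IsEquivalence := by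
  have := h.isIso_postAdjunctionLeft_counit A
  have := (Over.postAdjunctionLeft adj (X := A)).isIso_unit_of_isIso_counit
  exact (Over.postAdjunctionLeft adj).toEquivalence.isEquivalence_functor

end

/-- For a left adjoint `j₁ : U ⥤ X` with `U` having pullbacks, the following are equivalent:
(1) `j₁` is conservative, preserves pullbacks, and the counit is Cartesian;
(2) `j₁` is conservative and left Cartesian;
(3) every induced slice functor `U_{/A} → X_{/j₁ A}` is an equivalence.
Moreover, when `U` has a terminal object these conditions hold iff `j₁` is equivalent to a
slice projection. -/
theorem isLocallyCartesian_conservative_tfae {U : Type u₁} [Category.{v₁} U]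
    {X : Type u₂} [Category.{v₂} X] [HasPullbacks U]
    (j₁ : U ⥤ X) (js : X ⥤ U) (adj : j₁ ⊣ js) :
    ((j₁.ReflectsIsomorphisms ∧ Nonempty (PreservesLimitsOfShape WalkingCospan j₁) ∧
        (∀ {A B : X} (f : A ⟶ B),
          IsPullback (adj.counit.app A) (j₁.map (js.map f)) f (adj.counit.app B))) ↔
      (j₁.ReflectsIsomorphisms ∧ IsLocallyCartesianAdj adj)) ∧
    ((j₁.ReflectsIsomorphisms ∧ IsLocallyCartesianAdj adj) ↔
      (∀ A : U, (Over.post j₁ (X := A)).IsEquivalence)) ∧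
    (HasTerminal U →
      ((∀ A : U, (Over.post j₁ (X := A)).IsEquivalence) ↔
        ∃ (B : X) (e : U ≌ Over B), Nonempty (e.functor ⋙ Over.forget B ≅ j₁))) := by
  have h12 : (j₁.ReflectsIsomorphisms ∧ Nonempty (PreservesLimitsOfShape WalkingCospan j₁) ∧
      ∀ {A B : X} (f : A ⟶ B),
        IsPullback (adj.counit.app A) (j₁.map (js.map f)) f (adj.counit.app B)) →
      j₁.ReflectsIsomorphisms ∧ IsLocallyCartesianAdj adj :=
    fun ⟨hR, ⟨_⟩, hε⟩ => ⟨hR, IsLocallyCartesianAdj.of_isPullback_counit adj hε⟩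
  have h23 : j₁.ReflectsIsomorphisms ∧ IsLocallyCartesianAdj adj →
      ∀ A : U, (Over.post j₁ (X := A)).IsEquivalence :=
    fun ⟨_, h⟩ => h.isEquivalence_post
  have h31 (hE : ∀ A : U, (Over.post j₁ (X := A)).IsEquivalence) :
      j₁.ReflectsIsomorphisms ∧ Nonempty (PreservesLimitsOfShape WalkingCospan j₁) ∧
        ∀ {A B : X} (f : A ⟶ B),
          IsPullback (adj.counit.app A) (j₁.map (js.map f)) f (adj.counit.app B) :=
    ⟨j₁.reflectsIsomorphisms_of_post, ⟨j₁.preservesLimitsOfShape_walkingCospan_of_post⟩,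
      fun f => adj.isPullback_counit_of_post f⟩
  exact ⟨⟨h12, h31 ∘ h23⟩, ⟨h23, h12 ∘ h31⟩,
    fun _ => j₁.isEquivalence_post_iff_exists_equivalence_over⟩
end
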